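/- arXiv:2308.05469 — 5 statements merged into one kernel-verified Lean document; each statement's English description precedes it below -/
import Mathlib

section
/- For α ∈ ℝ and i, j ∈ {1,...,d}, the operators d^α_j f(x) := −(1−‖x‖²) ∂_j f(x) + 2(α+1) x_j f(x) satisfy the commutation relation ∂_i ∘ d^{α−1}_j − d^α_j ∘ ∂_i = 2 D_{i,j} + 2α δ_{i,j} I on smooth functions, where D_{i,j} = x_i ∂_j − x_j ∂_i and I is the identity operator. -/
open MeasureTheory

/-- Partial derivative in the `i`-th coordinate direction. -/
noncomputable def pd {d : ℕ} (i : Fin d) (f : EuclideanSpace ℝ (Fin d) → ℝ)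
    (x : EuclideanSpace ℝ (Fin d)) : ℝ :=
  fderiv ℝ f x (EuclideanSpace.single i 1)

/-- The angular differential operator `D_{i,j} = x_i ∂_j − x_j ∂_i`. -/
noncomputable def Dop {d : ℕ} (k l : Fin d) (f : EuclideanSpace ℝ (Fin d) → ℝ)
    (x : EuclideanSpace ℝ (Fin d)) : ℝ :=
  x k * pd l f x - x l * pd k f x

/-- The first-order operator `d^α_j f(x) = −(1−‖x‖²) ∂_j f(x) + 2(α+1) x_j f(x)`. -/
noncomputable def dop {d : ℕ} (α : ℝ) (j : Fin d) (f : EuclideanSpace ℝ (Fin d) → ℝ)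
    (x : EuclideanSpace ℝ (Fin d)) : ℝ :=
  -(1 - ‖x‖ ^ 2) * pd j f x + 2 * (α + 1) * x j * f x

/-- Commutation relation `∂_i ∘ d^{α−1}_j − d^α_j ∘ ∂_i = 2 D_{i,j} + 2α δ_{i,j} I`. -/
theorem stmt1 {d : ℕ} (hd : 1 ≤ d) (α : ℝ) (i j : Fin d)
    (f : EuclideanSpace ℝ (Fin d) → ℝ) (hf : ContDiff ℝ (⊤ : ℕ∞) f)
    (x : EuclideanSpace ℝ (Fin d)) :
    pd i (fun y => dop (α - 1) j f y) x - dop α j (fun y => pd i f y) x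
      = 2 * Dop i j f x + 2 * α * (if i = j then 1 else 0) * f x := by
  classical
  set v : EuclideanSpace ℝ (Fin d) := EuclideanSpace.single i 1 with hv
  set w : EuclideanSpace ℝ (Fin d) := EuclideanSpace.single j 1 with hw
  set A : EuclideanSpace ℝ (Fin d) →L[ℝ] EuclideanSpace ℝ (Fin d) →L[ℝ] ℝ :=
    fderiv ℝ (fderiv ℝ f) x with hA
  have hdfd : Differentiable ℝ (fderiv ℝ f) := (hf.fderiv_right (m := 1) (WithTop.coe_le_coe.mpr le_top)).differentiable one_ne_zero
  have hpdd : ∀ u : EuclideanSpace ℝ (Fin d),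
      HasFDerivAt (fun y => fderiv ℝ f y u)
        ((ContinuousLinearMap.apply ℝ ℝ u).comp A) x :=
    fun u => (ContinuousLinearMap.apply ℝ ℝ u).hasFDerivAt.comp x (hdfd x).hasFDerivAt
  have hsymm : A v w = A w v := (hf.contDiffAt.isSymmSndFDerivAt (by rw [minSmoothness_of_isRCLikeNormedField]; exact WithTop.coe_le_coe.mpr le_top)) v w
  have hN : HasFDerivAt (fun y : EuclideanSpace ℝ (Fin d) => ‖y‖ ^ 2)
      (2 • (innerSL ℝ x)) x := (hasStrictFDerivAt_norm_sq x).hasFDerivAt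
  have hF : HasFDerivAt f (fderiv ℝ f x) x := (hf.differentiable (by simp) x).hasFDerivAt
  have hC : HasFDerivAt (fun y : EuclideanSpace ℝ (Fin d) => y j)
      (EuclideanSpace.proj (𝕜 := ℝ) j) x := by
    exact (EuclideanSpace.proj (𝕜 := ℝ) j).hasFDerivAt
  have H : HasFDerivAt (fun y => dop (α - 1) j f y)
      (((-(1 - ‖x‖ ^ 2)) • ((ContinuousLinearMap.apply ℝ ℝ w).comp A)
          + (fderiv ℝ f x w) • (-((0 : EuclideanSpace ℝ (Fin d) →L[ℝ] ℝ) - 2 • (innerSL ℝ x))))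
        + ((2 * ((α - 1) + 1) * x j) • fderiv ℝ f x
          + f x • ((2 * ((α - 1) + 1)) • (EuclideanSpace.proj (𝕜 := ℝ) j)))) x :=
    ((((hasFDerivAt_const (1 : ℝ) x).sub hN).neg.mul (hpdd w)).add
      ((hC.const_mul (2 * ((α - 1) + 1))).mul hF))
  have key1 : pd i (fun y => dop (α - 1) j f y) x
      = (((-(1 - ‖x‖ ^ 2)) • ((ContinuousLinearMap.apply ℝ ℝ w).comp A)
          + (fderiv ℝ f x w) • (-((0 : EuclideanSpace ℝ (Fin d) →L[ℝ] ℝ) - 2 • (innerSL ℝ x))))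
        + ((2 * ((α - 1) + 1) * x j) • fderiv ℝ f x
          + f x • ((2 * ((α - 1) + 1)) • (EuclideanSpace.proj (𝕜 := ℝ) j)))) v := by
    simp only [pd, H.fderiv, hv]
  have key2 : pd j (fun y => pd i f y) x = A w v := by
    simp only [pd]
    rw [(hpdd (EuclideanSpace.single i 1)).fderiv]
    rfl
  have hiv : (innerSL ℝ x) v = x i := by
    simp [hv, EuclideanSpace.inner_single_right]
  have hpv : (EuclideanSpace.proj (𝕜 := ℝ) j) v = if i = j then 1 else 0 := by
    simp [hv, EuclideanSpace.single_apply, eq_comm]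
  have hfv : fderiv ℝ f x v = pd i f x := rfl
  have hfw : fderiv ℝ f x w = pd j f x := rfl
  rw [key1]
  simp only [ContinuousLinearMap.add_apply, ContinuousLinearMap.smul_apply,
    ContinuousLinearMap.comp_apply, ContinuousLinearMap.apply_apply,
    ContinuousLinearMap.neg_apply, ContinuousLinearMap.sub_apply,
    ContinuousLinearMap.zero_apply, hiv, hpv, hfv, hfw, smul_eq_mul]
  simp only [dop, Dop, key2, hfv, hfw]
  rw [hsymm]
  by_cases hij : i = j <;> simp [hij] <;> ring
end

section
/- Let α > −1 and f, g ∈ C¹ of the closed unit ball of ℝ^d. Then for each j ∈ {1,...,d}, ∫_{B^d} (∂_j f) conj(g) (1−‖x‖²)^{α+1} dx = ∫_{B^d} f conj(d^α_j g) (1−‖x‖²)^α dx, where d^α_j g(x) = −(1−‖x‖²) ∂_j g(x) + 2(α+1) x_j g(x). -/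
open MeasureTheory

open Metric Set

lemma norm_sq_eq' {m : ℕ} (x : EuclideanSpace ℝ (Fin m)) : ‖x‖^2 = ∑ i, (x i)^2 := by
  rw [EuclideanSpace.norm_eq, Real.sq_sqrt (by positivity)]
  simp [Real.norm_eq_abs, sq_abs]

lemma aux_int1 {d : ℕ} {α : ℝ} (hα : -1 < α) (hα0 : α < 0) :
    IntegrableOn (fun x : EuclideanSpace ℝ (Fin (d+1)) => (1-‖x‖) ^ α)
      (Metric.ball 0 1) := by
  set B := Metric.ball (0 : EuclideanSpace ℝ (Fin (d+1))) 1 with hB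
  set μ := volume.restrict B with hμ
  set ν := volume (Metric.ball (0 : EuclideanSpace ℝ (Fin (d+1))) 1) with hν
  have hνfin : ν ≠ ⊤ := measure_ball_lt_top.ne
  have hmeas : Measurable fun x : EuclideanSpace ℝ (Fin (d+1)) => (1-‖x‖) ^ α := by
    fun_prop
  have hae : 0 ≤ᵐ[μ] fun x : EuclideanSpace ℝ (Fin (d+1)) => (1-‖x‖) ^ α := by
    filter_upwards [ae_restrict_mem measurableSet_ball] with x hx
    rw [mem_ball_zero_iff] at hx
    have : 0 < 1 - ‖x‖ := by linarith
    positivity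
  have hinv : α⁻¹ < -1 := by
    rw [show (-1 : ℝ) = (-1)⁻¹ by norm_num]
    exact (inv_lt_inv_of_neg (by linarith) (by norm_num)).mpr hα
  refine ⟨hmeas.aestronglyMeasurable, ?_⟩
  rw [hasFiniteIntegral_iff_ofReal hae, lintegral_eq_lintegral_meas_le μ hae hmeas.aemeasurable]
  -- bound on the level set measure for t > 1
  have key : ∀ t ∈ Ioi (1:ℝ),
      μ {a | t ≤ (1-‖a‖) ^ α} ≤ ENNReal.ofReal ((d+1) * t ^ α⁻¹) * ν := by
    intro t ht
    rw [mem_Ioi] at ht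
    have ht0 : (0:ℝ) < t := by linarith
    have hs1 : t ^ α⁻¹ ≤ 1 := Real.rpow_le_one_of_one_le_of_nonpos ht.le (by
      exact le_of_lt (by linarith))
    have hs0 : 0 ≤ t ^ α⁻¹ := Real.rpow_nonneg ht0.le _
    have hex : ∃ c : ℝ, c = 1 - t ^ α⁻¹ := ⟨_, rfl⟩
    obtain ⟨c, hc⟩ := hex
    have hc0 : 0 ≤ c := by rw [hc]; linarith
    have hc1 : c ≤ 1 := by rw [hc]; linarith
    have hsub : {a : EuclideanSpace ℝ (Fin (d+1)) | t ≤ (1-‖a‖) ^ α} ∩ B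
        ⊆ B \ Metric.ball 0 c := by
      rintro a ⟨ha, haB⟩
      have haB' : ‖a‖ < 1 := mem_ball_zero_iff.mp haB
      refine ⟨haB, fun hmem => ?_⟩
      rw [mem_ball_zero_iff] at hmem
      have hspos : 0 < 1 - ‖a‖ := by linarith
      have h1 : ((1-‖a‖) ^ α) ^ α⁻¹ ≤ t ^ α⁻¹ :=
        Real.rpow_le_rpow_of_nonpos ht0 ha (by exact le_of_lt (by linarith))
      rw [← Real.rpow_mul hspos.le, mul_inv_cancel₀ (ne_of_lt hα0), Real.rpow_one] at h1
      have : c ≤ ‖a‖ := by simp only [hc]; linarith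
      linarith
    calc μ {a | t ≤ (1-‖a‖) ^ α}
        = volume ({a : EuclideanSpace ℝ (Fin (d+1)) | t ≤ (1-‖a‖) ^ α} ∩ B) :=
          Measure.restrict_apply' measurableSet_ball
      _ ≤ volume (B \ Metric.ball 0 c) := measure_mono hsub
      _ = ν - volume (Metric.ball (0 : EuclideanSpace ℝ (Fin (d+1))) c) := by
          rw [measure_diff (ball_subset_ball hc1) measurableSet_ball.nullMeasurableSet
            measure_ball_lt_top.ne]
      _ = ν - ENNReal.ofReal (c ^ (d+1)) * ν := by
          rw [Measure.addHaar_ball volume _ hc0]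
          congr 2
          simp [finrank_euclideanSpace]
      _ = (1 - ENNReal.ofReal (c ^ (d+1))) * ν := by
          rw [ENNReal.sub_mul (fun _ _ => hνfin), one_mul]
      _ ≤ ENNReal.ofReal ((d+1) * t ^ α⁻¹) * ν := by
          gcongr
          rw [← ENNReal.ofReal_one, ← ENNReal.ofReal_sub _ (by positivity)]
          apply ENNReal.ofReal_le_ofReal
          have hbern : 1 + ((d+1:ℕ) : ℝ) * (-(t ^ α⁻¹)) ≤ (1 + (-(t ^ α⁻¹))) ^ (d+1) :=
            one_add_mul_le_pow (by linarith) (d+1)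
          have : (1 + (-(t ^ α⁻¹))) ^ (d+1) = c ^ (d+1) := by rw [hc]; ring_nf
          rw [this] at hbern
          push_cast at hbern ⊢
          linarith
  calc ∫⁻ t in Ioi (0:ℝ), μ {a | t ≤ (1-‖a‖) ^ α}
      ≤ ∫⁻ t in Ioc (0:ℝ) 1 ∪ Ioi 1, μ {a | t ≤ (1-‖a‖) ^ α} :=
        lintegral_mono_set Ioi_subset_Ioc_union_Ioi
    _ ≤ (∫⁻ t in Ioc (0:ℝ) 1, μ {a | t ≤ (1-‖a‖) ^ α})
        + ∫⁻ t in Ioi (1:ℝ), μ {a | t ≤ (1-‖a‖) ^ α} := lintegral_union_le _ _ _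
    _ < ⊤ := by
        refine ENNReal.add_lt_top.2 ⟨?_, ?_⟩
        · calc (∫⁻ t in Ioc (0:ℝ) 1, μ {a | t ≤ (1-‖a‖) ^ α})
              ≤ ∫⁻ _ in Ioc (0:ℝ) 1, ν := by
                refine setLIntegral_mono' measurableSet_Ioc fun t _ => ?_
                rw [hμ]
                exact le_trans (measure_mono (subset_univ _))
                  (by rw [Measure.restrict_apply_univ])
            _ < ⊤ := by
                rw [setLIntegral_const]
                exact ENNReal.mul_lt_top hνfin.lt_top (by simp)
        · calc (∫⁻ t in Ioi (1:ℝ), μ {a | t ≤ (1-‖a‖) ^ α})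
              ≤ ∫⁻ t in Ioi (1:ℝ), ENNReal.ofReal ((d+1) * t ^ α⁻¹) * ν :=
                setLIntegral_mono' measurableSet_Ioi key
            _ = (∫⁻ t in Ioi (1:ℝ), ENNReal.ofReal ((d+1) * t ^ α⁻¹)) * ν :=
                lintegral_mul_const' ν _ hνfin
            _ < ⊤ := by
                refine ENNReal.mul_lt_top ?_ hνfin.lt_top
                refine IntegrableOn.setLIntegral_lt_top ?_
                exact (integrableOn_Ioi_rpow_of_lt hinv one_pos).const_mul _

lemma aux_int2 {d : ℕ} {α : ℝ} (hα : -1 < α) :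
    IntegrableOn (fun x : EuclideanSpace ℝ (Fin (d+1)) => (1-‖x‖^2) ^ α)
      (Metric.ball 0 1) := by
  have hmeas : Measurable fun x : EuclideanSpace ℝ (Fin (d+1)) => (1-‖x‖^2) ^ α := by
    fun_prop
  rcases le_or_gt 0 α with h0 | h0
  · refine Measure.integrableOn_of_bounded measure_ball_lt_top.ne
      hmeas.aestronglyMeasurable (M := 1) ?_
    filter_upwards [ae_restrict_mem measurableSet_ball] with x hx
    rw [mem_ball_zero_iff] at hx
    have h1 : 0 ≤ 1 - ‖x‖^2 := by nlinarith [norm_nonneg x]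
    have h2 : 1 - ‖x‖^2 ≤ 1 := by nlinarith [norm_nonneg x]
    rw [Real.norm_eq_abs, abs_of_nonneg (Real.rpow_nonneg h1 _)]
    exact Real.rpow_le_one h1 h2 h0
  · refine Integrable.mono (aux_int1 hα h0) hmeas.aestronglyMeasurable ?_
    filter_upwards [ae_restrict_mem measurableSet_ball] with x hx
    rw [mem_ball_zero_iff] at hx
    have hn : 0 ≤ ‖x‖ := norm_nonneg x
    have h1 : 0 < 1 - ‖x‖ := by linarith
    have h2 : 1 - ‖x‖ ≤ 1 - ‖x‖^2 := by nlinarith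
    rw [Real.norm_eq_abs, Real.norm_eq_abs,
      abs_of_nonneg (Real.rpow_nonneg (by linarith) _),
      abs_of_nonneg (Real.rpow_nonneg h1.le _)]
    exact Real.rpow_le_rpow_of_nonpos h1 h2 h0.le

set_option maxHeartbeats 1000000 in
/-- Adjointness relation `⟨∂_j f, g⟩_{α+1} = ⟨f, d^α_j g⟩_α`. -/
theorem stmt3 {d : ℕ} (hd : 1 ≤ d) (α : ℝ) (hα : -1 < α) (j : Fin d)
    (f g : EuclideanSpace ℝ (Fin d) → ℝ)
    (hf : ContDiffOn ℝ 1 f (Metric.closedBall 0 1))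
    (hg : ContDiffOn ℝ 1 g (Metric.closedBall 0 1)) :
    ∫ x in Metric.ball (0 : EuclideanSpace ℝ (Fin d)) 1,
        pd j f x * g x * (1 - ‖x‖ ^ 2) ^ (α + 1)
      = ∫ x in Metric.ball (0 : EuclideanSpace ℝ (Fin d)) 1,
          f x * dop α j g x * (1 - ‖x‖ ^ 2) ^ α := by
  obtain ⟨n, rfl⟩ : ∃ n, d = n + 1 := ⟨d - 1, (Nat.succ_pred_eq_of_pos hd).symm⟩
  set B := Metric.ball (0 : EuclideanSpace ℝ (Fin (n+1))) 1 with hBdef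
  set cb := Metric.closedBall (0 : EuclideanSpace ℝ (Fin (n+1))) 1 with hcbdef
  have hsub : B ⊆ cb := ball_subset_closedBall
  have hBmeas : MeasurableSet B := measurableSet_ball
  have hwpos : ∀ x ∈ B, (0:ℝ) < 1 - ‖x‖^2 := by
    intro x hx
    rw [hBdef, mem_ball_zero_iff] at hx
    nlinarith [norm_nonneg x]
  have hwle1 : ∀ x : EuclideanSpace ℝ (Fin (n+1)), x ∈ B → 1 - ‖x‖^2 ≤ 1 := by
    intro x hx; nlinarith [norm_nonneg x]
  -- bounds on f, g and their derivatives
  have hcompact : IsCompact cb := isCompact_closedBall _ _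
  obtain ⟨Mf, hMf⟩ := hcompact.exists_bound_of_continuousOn hf.continuousOn
  obtain ⟨Mg, hMg⟩ := hcompact.exists_bound_of_continuousOn hg.continuousOn
  have hud : UniqueDiffOn ℝ cb := uniqueDiffOn_convex (convex_closedBall _ _)
    (by rw [hcbdef, interior_closedBall _ one_ne_zero]; exact ⟨0, mem_ball_self one_pos⟩)
  have hnhds : ∀ x ∈ B, cb ∈ nhds x := fun x hx =>
    mem_nhds_iff.2 ⟨B, hsub, isOpen_ball, hx⟩
  obtain ⟨Mf', hMf'⟩ := hcompact.exists_bound_of_continuousOn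
    (hf.continuousOn_fderivWithin hud le_rfl)
  obtain ⟨Mg', hMg'⟩ := hcompact.exists_bound_of_continuousOn
    (hg.continuousOn_fderivWithin hud le_rfl)
  have hpdbound : ∀ (u : EuclideanSpace ℝ (Fin (n+1)) → ℝ) (Mu : ℝ),
      ContDiffOn ℝ 1 u cb → (∀ x ∈ cb, ‖fderivWithin ℝ u cb x‖ ≤ Mu) →
      ∀ x ∈ B, |pd j u x| ≤ Mu := by
    intro u Mu hu hMu x hx
    have h1 : fderiv ℝ u x = fderivWithin ℝ u cb x :=
      (fderivWithin_of_mem_nhds (hnhds x hx)).symm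
    have : ‖(fderiv ℝ u x) (EuclideanSpace.single j 1)‖ ≤ Mu := by
      rw [h1]
      refine le_trans (ContinuousLinearMap.le_opNorm _ _) ?_
      rw [EuclideanSpace.norm_single, norm_one, mul_one]
      exact hMu x (hsub hx)
    simpa [pd, Real.norm_eq_abs] using this
  have hpdf_bound := hpdbound f Mf' hf hMf'
  have hpdg_bound := hpdbound g Mg' hg hMg'
  have hD : ∀ (u : EuclideanSpace ℝ (Fin (n+1)) → ℝ), ContDiffOn ℝ 1 u cb →
      ∀ x ∈ B, HasFDerivAt u (fderiv ℝ u x) x := fun u hu x hx =>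
    ((hu.differentiableOn one_ne_zero).differentiableAt (hnhds x hx)).hasFDerivAt
  have hfD := hD f hf
  have hgD := hD g hg
  have hpdcont : ∀ (u : EuclideanSpace ℝ (Fin (n+1)) → ℝ), ContDiffOn ℝ 1 u cb →
      ContinuousOn (pd j u) B := by
    intro u hu
    have h1 : ContinuousOn (fderiv ℝ u) B :=
      (hu.mono hsub).continuousOn_fderiv_of_isOpen isOpen_ball le_rfl
    exact (ContinuousLinearMap.apply ℝ ℝ (EuclideanSpace.single j 1)).continuous.comp_continuousOn h1
  have hwcont : Continuous (fun x : EuclideanSpace ℝ (Fin (n+1)) => 1 - ‖x‖^2) := by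
    fun_prop
  have hw1cont : Continuous (fun x : EuclideanSpace ℝ (Fin (n+1)) => (1-‖x‖^2) ^ (α+1)) := by
    rw [continuous_iff_continuousAt]
    intro x
    exact (Real.continuousAt_rpow_const _ _ (Or.inr (by linarith))).comp hwcont.continuousAt
  have hwacont : ContinuousOn (fun x : EuclideanSpace ℝ (Fin (n+1)) => (1-‖x‖^2) ^ α) B := by
    intro x hx
    have h1 : ContinuousAt (fun v : ℝ => v ^ α) (1-‖x‖^2) :=
      Real.continuousAt_rpow_const _ _ (Or.inl (ne_of_gt (hwpos x hx)))
    exact (ContinuousAt.comp (f := fun x : EuclideanSpace ℝ (Fin (n+1)) => 1-‖x‖^2)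
      h1 hwcont.continuousAt).continuousWithinAt
  have hxjcont : Continuous (fun x : EuclideanSpace ℝ (Fin (n+1)) => x j) :=
    (EuclideanSpace.proj (𝕜 := ℝ) j).continuous
  have hcoord : ∀ x : EuclideanSpace ℝ (Fin (n+1)), |x j| ≤ ‖x‖ := by
    intro x
    have h2 : (x j)^2 ≤ ‖x‖^2 := by
      rw [norm_sq_eq']
      exact Finset.single_le_sum (fun i _ => sq_nonneg (x i)) (Finset.mem_univ j)
    calc |x j| = Real.sqrt ((x j)^2) := (Real.sqrt_sq_eq_abs _).symm
      _ ≤ Real.sqrt (‖x‖^2) := Real.sqrt_le_sqrt h2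
      _ = ‖x‖ := Real.sqrt_sq (norm_nonneg x)
  have hMf0 : 0 ≤ Mf := le_trans (norm_nonneg _) (hMf 0 (mem_closedBall_self zero_le_one))
  have hMg0 : 0 ≤ Mg := le_trans (norm_nonneg _) (hMg 0 (mem_closedBall_self zero_le_one))
  have hMf'0 : 0 ≤ Mf' := le_trans (norm_nonneg _) (hMf' 0 (mem_closedBall_self zero_le_one))
  have hMg'0 : 0 ≤ Mg' := le_trans (norm_nonneg _) (hMg' 0 (mem_closedBall_self zero_le_one))
  -- the three pieces
  set P1 : EuclideanSpace ℝ (Fin (n+1)) → ℝ :=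
    fun x => pd j f x * g x * (1 - ‖x‖ ^ 2) ^ (α + 1) with hP1def
  set P2 : EuclideanSpace ℝ (Fin (n+1)) → ℝ :=
    fun x => f x * pd j g x * (1 - ‖x‖ ^ 2) ^ (α + 1) with hP2def
  set P3 : EuclideanSpace ℝ (Fin (n+1)) → ℝ :=
    fun x => 2 * (α + 1) * x j * f x * g x * (1 - ‖x‖ ^ 2) ^ α with hP3def
  haveI : IsFiniteMeasure (volume.restrict B) :=
    ⟨by rw [Measure.restrict_apply_univ]; exact measure_ball_lt_top⟩
  have hIO : ∀ (u : EuclideanSpace ℝ (Fin (n+1)) → ℝ) (C : ℝ), ContinuousOn u B →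
      (∀ x ∈ B, ‖u x‖ ≤ C) → IntegrableOn u B := by
    intro u C hc hb
    exact ⟨hc.aestronglyMeasurable hBmeas, HasFiniteIntegral.of_bounded (C := C)
      (by filter_upwards [ae_restrict_mem hBmeas] with x hx using hb x hx)⟩
  have hw1bound : ∀ x ∈ B, |(1 - ‖x‖ ^ 2) ^ (α+1)| ≤ 1 := by
    intro x hx
    rw [abs_of_nonneg (Real.rpow_nonneg (le_of_lt (hwpos x hx)) _)]
    exact Real.rpow_le_one (le_of_lt (hwpos x hx)) (hwle1 x hx) (by linarith)
  have hI1 : IntegrableOn P1 B := by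
    refine hIO P1 (Mf' * Mg) (((hpdcont f hf).mul (hg.continuousOn.mono hsub)).mul
      hw1cont.continuousOn) ?_
    intro x hx
    have h1 := hpdf_bound x hx
    have h2 : |g x| ≤ Mg := by simpa [Real.norm_eq_abs] using hMg x (hsub hx)
    have h3 := hw1bound x hx
    rw [hP1def]
    simp only [Real.norm_eq_abs, abs_mul]
    calc |pd j f x| * |g x| * |(1 - ‖x‖ ^ 2) ^ (α+1)|
        ≤ (Mf' * Mg) * 1 := by
          apply mul_le_mul (mul_le_mul h1 h2 (abs_nonneg _) hMf'0) h3 (abs_nonneg _)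
            (mul_nonneg hMf'0 hMg0)
      _ = Mf' * Mg := mul_one _
  have hI2 : IntegrableOn P2 B := by
    refine hIO P2 (Mf * Mg') (((hf.continuousOn.mono hsub).mul (hpdcont g hg)).mul
      hw1cont.continuousOn) ?_
    intro x hx
    have h1 : |f x| ≤ Mf := by simpa [Real.norm_eq_abs] using hMf x (hsub hx)
    have h2 := hpdg_bound x hx
    have h3 := hw1bound x hx
    rw [hP2def]
    simp only [Real.norm_eq_abs, abs_mul]
    calc |f x| * |pd j g x| * |(1 - ‖x‖ ^ 2) ^ (α+1)|
        ≤ (Mf * Mg') * 1 := by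
          apply mul_le_mul (mul_le_mul h1 h2 (abs_nonneg _) hMf0) h3 (abs_nonneg _)
            (mul_nonneg hMf0 hMg'0)
      _ = Mf * Mg' := mul_one _
  have hI3 : IntegrableOn P3 B := by
    have hbig : IntegrableOn
        (fun x : EuclideanSpace ℝ (Fin (n+1)) => (2*(α+1)*(Mf*Mg)) * (1-‖x‖^2) ^ α) B :=
      (aux_int2 hα).const_mul _
    refine Integrable.mono hbig ?_ ?_
    · refine ContinuousOn.aestronglyMeasurable ?_ hBmeas
      exact ((((continuous_const.mul hxjcont).continuousOn.mul
        (hf.continuousOn.mono hsub)).mul (hg.continuousOn.mono hsub)).mul hwacont)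
    · filter_upwards [ae_restrict_mem hBmeas] with x hx
      have h1 : |f x| ≤ Mf := by simpa [Real.norm_eq_abs] using hMf x (hsub hx)
      have h2 : |g x| ≤ Mg := by simpa [Real.norm_eq_abs] using hMg x (hsub hx)
      have h3 : |x j| ≤ 1 := le_trans (hcoord x) (le_of_lt (mem_ball_zero_iff.mp hx))
      have h2a : (0:ℝ) ≤ 2*(α+1) := by linarith
      have hC0 : (0:ℝ) ≤ 2*(α+1)*(Mf*Mg) := mul_nonneg h2a (mul_nonneg hMf0 hMg0)
      have key : |2*(α+1) * x j * f x * g x| ≤ 2*(α+1)*(Mf*Mg) := by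
        have e1 : |2*(α+1) * x j * f x * g x| = 2*(α+1) * (|x j| * (|f x| * |g x|)) := by
          rw [abs_mul, abs_mul, abs_mul, abs_of_nonneg h2a]; ring
        have b3 : |x j| * (|f x| * |g x|) ≤ 1 * (Mf * Mg) :=
          mul_le_mul h3 (mul_le_mul h1 h2 (abs_nonneg _) hMf0)
            (mul_nonneg (abs_nonneg _) (abs_nonneg _)) zero_le_one
        rw [e1]
        calc 2*(α+1) * (|x j| * (|f x| * |g x|)) ≤ 2*(α+1) * (1 * (Mf * Mg)) :=
              mul_le_mul_of_nonneg_left b3 h2a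
          _ = 2*(α+1)*(Mf*Mg) := by ring
      rw [hP3def]
      simp only [Real.norm_eq_abs]
      calc |2*(α+1) * x j * f x * g x * (1-‖x‖^2)^α|
          = |2*(α+1) * x j * f x * g x| * |(1-‖x‖^2)^α| := abs_mul _ _
        _ ≤ (2*(α+1)*(Mf*Mg)) * |(1-‖x‖^2)^α| :=
            mul_le_mul_of_nonneg_right key (abs_nonneg _)
        _ = |2*(α+1)*(Mf*Mg) * (1-‖x‖^2)^α| := by rw [abs_mul, abs_of_nonneg hC0]
  -- pointwise rewriting of the RHS integrand
  have hRHS : ∀ x ∈ B, f x * dop α j g x * (1 - ‖x‖ ^ 2) ^ α = P3 x - P2 x := by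
    intro x hx
    have hw0 : (1 - ‖x‖^2) ≠ 0 := ne_of_gt (hwpos x hx)
    rw [hP2def, hP3def]
    simp only [dop]
    rw [Real.rpow_add_one hw0 α]
    ring
  -- the core vanishing integral
  have hcore : ∫ x in B, (P1 x + P2 x - P3 x) = 0 := by
    set Φ : EuclideanSpace ℝ (Fin (n+1)) → ℝ :=
      fun x => f x * g x * (1 - ‖x‖ ^ 2) ^ (α + 1) with hPhidef
    set G : EuclideanSpace ℝ (Fin (n+1)) → ℝ := fun x => P1 x + P2 x - P3 x with hGdef
    set H : EuclideanSpace ℝ (Fin (n+1)) → ℝ := B.indicator G with hHdef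
    have hGint : IntegrableOn G B := (hI1.add hI2).sub hI3
    have hHint : Integrable H := (integrable_indicator_iff hBmeas).2 hGint
    set T := ((MeasurableEquiv.piFinSuccAbove (fun _ : Fin (n+1) => ℝ) j).symm).trans
      (MeasurableEquiv.toLp 2 (Fin (n+1) → ℝ)) with hTdef
    have hTpres : MeasurePreserving T volume volume := by
      have h1 := ((MeasurableEquiv.piFinSuccAbove (fun _ : Fin (n+1) => ℝ) j)).symm
          |>.measurable
      have hp1 := (volume_preserving_piFinSuccAbove (fun _ : Fin (n+1) => ℝ) j).symm
        (MeasurableEquiv.piFinSuccAbove (fun _ : Fin (n+1) => ℝ) j)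
      have hp2 := (EuclideanSpace.volume_preserving_symm_measurableEquiv_toLp (Fin (n+1))).symm
        (MeasurableEquiv.toLp 2 (Fin (n+1) → ℝ)).symm
      exact hp2.comp hp1
    have htrans : ∫ x, H x = ∫ z : ℝ × (Fin n → ℝ), H (T z) :=
      (hTpres.integral_comp T.measurableEmbedding H).symm
    have hHTi : Integrable (fun z : ℝ × (Fin n → ℝ) => H (T z)) :=
      (hTpres.integrable_comp_emb T.measurableEmbedding).2 hHint
    rw [Measure.volume_eq_prod] at hHTi
    have hiter : ∫ z : ℝ × (Fin n → ℝ), H (T z) = ∫ y, ∫ t, H (T (t, y)) := by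
      rw [Measure.volume_eq_prod]
      exact integral_prod_symm _ hHTi
    have hslices := hHTi.prod_left_ae
    have hzero : ∀ᵐ y : Fin n → ℝ, (∫ t, H (T (t, y))) = 0 := by
      filter_upwards [hslices] with y hy
      set X : ℝ → EuclideanSpace ℝ (Fin (n+1)) := fun t => T (t, y) with hXdef
      have hrw0 : (∫ t, H (T (t, y))) = ∫ t, H (X t) := rfl
      rw [hrw0]
      have hco : ∀ (t : ℝ) (k : Fin (n+1)), X t k = Fin.insertNth (α := fun _ => ℝ) j t y k :=
        fun _ _ => rfl
      set q := ∑ i, (y i)^2 with hqdef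
      have hq0 : 0 ≤ q := Finset.sum_nonneg fun i _ => sq_nonneg _
      have hXj : ∀ t, X t j = t := fun t => by rw [hco, Fin.insertNth_apply_same]
      have hXn : ∀ t, ‖X t‖^2 = t^2 + q := by
        intro t
        rw [norm_sq_eq', Fin.sum_univ_succAbove (fun k => (X t k)^2) j]
        congr 1
        · rw [hco, Fin.insertNth_apply_same]
        · refine Finset.sum_congr rfl fun i _ => ?_
          rw [hco, Fin.insertNth_apply_succAbove]
      have hXline : ∀ t, X t = X 0 + t • (EuclideanSpace.single j 1) := by
        intro t
        ext k
        show X t k = X 0 k + t * (EuclideanSpace.single j 1 k)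
        refine Fin.succAboveCases j ?_ ?_ k
        · rw [hXj, hXj, EuclideanSpace.single_apply, if_pos rfl]; ring
        · intro i
          rw [hco, hco, Fin.insertNth_apply_succAbove, Fin.insertNth_apply_succAbove,
            EuclideanSpace.single_apply, if_neg (Fin.succAbove_ne j i)]
          ring
      clear_value X
      have hXc : Continuous X := by
        rw [show X = fun t => X 0 + t • (EuclideanSpace.single j 1) from funext hXline]
        fun_prop
      have hmem : ∀ t, X t ∈ B ↔ t^2 + q < 1 := by
        intro t
        rw [hBdef, mem_ball_zero_iff]
        constructor
        · intro h; nlinarith [norm_nonneg (X t), hXn t]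
        · intro h; nlinarith [norm_nonneg (X t), hXn t]
      rcases le_or_gt 1 q with hq1 | hq1
      · have hz : ∀ t : ℝ, H (X t) = 0 := by
          intro t
          rw [hHdef]
          refine Set.indicator_of_notMem (fun hc => ?_) _
          rw [hmem t] at hc
          nlinarith [sq_nonneg t]
        simp only [hz]
        exact integral_zero _ _
      · set r := Real.sqrt (1-q) with hrdef
        have hr0 : 0 < r := Real.sqrt_pos.2 (by linarith)
        have hr2 : r^2 = 1 - q := Real.sq_sqrt (by linarith)
        have houts : ∀ t, t ∉ Ioc (-r) r → H (X t) = 0 := by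
          intro t ht
          rw [hHdef]
          refine Set.indicator_of_notMem (fun hc => ?_) _
          rw [hmem t] at hc
          simp only [mem_Ioc, not_and_or, not_lt, not_le] at ht
          rcases ht with h | h <;> nlinarith
        have hIoc : ∫ t, H (X t) = ∫ t in Ioc (-r) r, H (X t) :=
          (setIntegral_eq_integral_of_forall_compl_eq_zero fun t ht => houts t ht).symm
        set F : ℝ → ℝ := fun t => B.indicator Φ (X t) with hFdef
        have hmaps : MapsTo X (Icc (-r) r) cb := by
          intro t ht
          rw [hcbdef, mem_closedBall_zero_iff]
          have h1 : t^2 ≤ r^2 := sq_le_sq' ht.1 ht.2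
          nlinarith [norm_nonneg (X t), hXn t]
        have hFcont : ContinuousOn F (Icc (-r) r) := by
          have hFn : ContinuousOn
              (fun t => f (X t) * g (X t) * (1 - (t^2+q)) ^ (α+1)) (Icc (-r) r) := by
            refine (ContinuousOn.mul (ContinuousOn.mul ?_ ?_) ?_)
            · exact hf.continuousOn.comp hXc.continuousOn hmaps
            · exact hg.continuousOn.comp hXc.continuousOn hmaps
            · have hb : Continuous (fun t : ℝ => 1 - (t^2+q)) := by fun_prop
              have : Continuous (fun t : ℝ => (1 - (t^2+q)) ^ (α+1)) := by
                rw [continuous_iff_continuousAt]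
                intro t
                exact (Real.continuousAt_rpow_const _ _ (Or.inr (by linarith))).comp
                  hb.continuousAt
              exact this.continuousOn
          refine hFn.congr fun t ht => ?_
          by_cases hb : t^2 + q < 1
          · rw [hFdef]
            simp only
            rw [Set.indicator_of_mem ((hmem t).2 hb), hPhidef]
            simp only
            rw [hXn t]
          · have h1 : t^2 ≤ r^2 := sq_le_sq' ht.1 ht.2
            have heq : 1 - (t^2+q) = 0 := by
              have : t^2 + q ≤ 1 := by nlinarith
              have : 1 ≤ t^2 + q := not_lt.1 hb
              linarith
            rw [hFdef]
            simp only
            rw [Set.indicator_of_notMem (fun hc => hb ((hmem t).1 hc)), heq,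
              Real.zero_rpow (by linarith : α + 1 ≠ 0), mul_zero]
        have hderiv : ∀ t ∈ Ioo (-r) r, HasDerivAt F (H (X t)) t := by
          intro t ht
          have hb : t^2 + q < 1 := by
            have : t^2 < r^2 := sq_lt_sq' ht.1 ht.2
            linarith [hr2 ▸ this]
          have hxB : X t ∈ B := (hmem t).2 hb
          have hw0 : (0:ℝ) < 1 - ‖X t‖^2 := hwpos _ hxB
          have hpath : HasDerivAt X (EuclideanSpace.single j 1) t := by
            have h0 : HasDerivAt (fun s : ℝ => X 0 + s • (EuclideanSpace.single j 1 :
                EuclideanSpace ℝ (Fin (n+1))))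
                ((1:ℝ) • (EuclideanSpace.single j 1 : EuclideanSpace ℝ (Fin (n+1)))) t :=
              HasDerivAt.const_add _ ((hasDerivAt_id t).smul_const _)
            rw [show X = fun s => X 0 + s • (EuclideanSpace.single j 1) from funext hXline]
            simpa using h0
          have hfD' : HasFDerivAt f (fderiv ℝ f (X t)) (X t) := hfD _ hxB
          have hgD' : HasFDerivAt g (fderiv ℝ g (X t)) (X t) := hgD _ hxB
          have hwD := (hasStrictFDerivAt_norm_sq (X t)).hasFDerivAt.const_sub (1:ℝ)
          have hwrD := hwD.rpow_const (p := α+1) (Or.inl (ne_of_gt hw0))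
          rw [add_sub_cancel_right] at hwrD
          have hPhiD := (hfD'.mul hgD').mul hwrD
          have hchain := HasFDerivAt.comp_hasDerivAt t hPhiD hpath
          have hev : F =ᶠ[nhds t] fun s => Φ (X s) := by
            have hmemnhds : X ⁻¹' B ∈ nhds t :=
              hXc.continuousAt.preimage_mem_nhds (isOpen_ball.mem_nhds hxB)
            filter_upwards [hmemnhds] with s hs
            rw [hFdef]
            simp only
            exact Set.indicator_of_mem (Set.mem_preimage.mp hs) Φ
          have hD2 := hchain.congr_of_eventuallyEq hev
          convert hD2 using 1
          · rfl
          · rfl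
          rw [hHdef]
          rw [Set.indicator_of_mem hxB, hGdef]
          simp only [hP1def, hP2def, hP3def, pd]
          simp only [ContinuousLinearMap.add_apply, ContinuousLinearMap.coe_smul',
            Pi.smul_apply, smul_eq_mul, ContinuousLinearMap.neg_apply,
            ContinuousLinearMap.smul_apply, innerSL_apply_apply,
            EuclideanSpace.inner_single_right, conj_trivial, two_smul, Pi.mul_apply]
          rw [hXj t]
          ring
        have hy' : Integrable (fun t => H (X t)) volume := by
          simpa only [hXdef] using hy
        have hII : IntervalIntegrable (fun t => H (X t)) volume (-r) r :=
          hy'.intervalIntegrable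
        have hFr : F r = 0 := by
          rw [hFdef]
          refine Set.indicator_of_notMem (fun hc => ?_) _
          rw [hmem r] at hc
          nlinarith
        have hFmr : F (-r) = 0 := by
          rw [hFdef]
          refine Set.indicator_of_notMem (fun hc => ?_) _
          rw [hmem (-r)] at hc
          nlinarith
        have hftc := intervalIntegral.integral_eq_sub_of_hasDeriv_right_of_le
          (by linarith : -r ≤ r) hFcont
          (fun t htt => (hderiv t htt).hasDerivWithinAt) hII
        rw [intervalIntegral.integral_of_le (by linarith : -r ≤ r)] at hftc
        rw [hIoc, hftc, hFr, hFmr, sub_zero]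
    have hfinal : ∫ y : Fin n → ℝ, ∫ t : ℝ, H (T (t, y)) = 0 := by
      rw [integral_congr_ae hzero]
      simp
    calc ∫ x in B, (P1 x + P2 x - P3 x) = ∫ x in B, G x := rfl
      _ = ∫ x, H x := (integral_indicator hBmeas).symm
      _ = ∫ z : ℝ × (Fin n → ℝ), H (T z) := htrans
      _ = ∫ y, ∫ t, H (T (t, y)) := hiter
      _ = 0 := hfinal
  have hsplit : ∫ x in B, (P1 x + P2 x - P3 x) =
      (∫ x in B, P1 x) + (∫ x in B, P2 x) - ∫ x in B, P3 x := by
    have hI12 : IntegrableOn (fun x => P1 x + P2 x) B := hI1.add hI2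
    rw [integral_sub hI12 hI3, integral_add hI1 hI2]
  have hR : ∫ x in B, f x * dop α j g x * (1 - ‖x‖ ^ 2) ^ α
      = (∫ x in B, P3 x) - ∫ x in B, P2 x := by
    rw [setIntegral_congr_fun hBmeas hRHS, integral_sub hI3 hI2]
  rw [hR]
  have : ∫ x in B, P1 x = (∫ x in B, P1 x) := rfl
  linarith [hcore, hsplit]
end

section
/- For every α ∈ ℝ and k ∈ {1,...,d}, the second-order operators ℒ^{(α)} := Σ_j d^α_j ∂_j − Σ_{1≤i<j≤d} D_{i,j}² satisfy the intertwining relation ℒ^{(α)} ∂_k = ∂_k ℒ^{(α−1)} − (d + 2α − 1) ∂_k on smooth functions on ℝ^d. -/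
open MeasureTheory

/-- The second-order Sturm–Liouville operator
`ℒ^{(α)} q = Σ_j d^α_j ∂_j q − Σ_{i<j} D_{i,j}² q`. -/
noncomputable def Lop {d : ℕ} (α : ℝ) (f : EuclideanSpace ℝ (Fin d) → ℝ)
    (x : EuclideanSpace ℝ (Fin d)) : ℝ :=
  (∑ j : Fin d, dop α j (fun y => pd j f y) x)
    - ∑ i : Fin d, ∑ j : Fin d,
        if i < j then Dop i j (fun y => Dop i j f y) x else 0



section Aux

variable {d : ℕ}

local notation "E" => EuclideanSpace ℝ (Fin d)

lemma contDiff_pd (i : Fin d) {f : E → ℝ} (hf : ContDiff ℝ (⊤ : ℕ∞) f) :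
    ContDiff ℝ (⊤ : ℕ∞) (pd i f) :=
  (hf.fderiv_right (by simp)).clm_apply contDiff_const

lemma diffAt {f : E → ℝ} (hf : ContDiff ℝ (⊤ : ℕ∞) f) (x : E) : DifferentiableAt ℝ f x :=
  hf.differentiable (by simp) x

lemma pd_add {f g : E → ℝ} (i : Fin d) (x : E) (hf : DifferentiableAt ℝ f x)
    (hg : DifferentiableAt ℝ g x) :
    pd i (fun y => f y + g y) x = pd i f x + pd i g x := by
  simp [pd, fderiv_fun_add hf hg]

lemma pd_sub {f g : E → ℝ} (i : Fin d) (x : E) (hf : DifferentiableAt ℝ f x)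
    (hg : DifferentiableAt ℝ g x) :
    pd i (fun y => f y - g y) x = pd i f x - pd i g x := by
  simp [pd, fderiv_fun_sub hf hg]

lemma pd_mul {f g : E → ℝ} (i : Fin d) (x : E) (hf : DifferentiableAt ℝ f x)
    (hg : DifferentiableAt ℝ g x) :
    pd i (fun y => f y * g y) x = pd i f x * g x + f x * pd i g x := by
  simp [pd, fderiv_fun_mul hf hg]; ring

lemma pd_const_mul {f : E → ℝ} (c : ℝ) (i : Fin d) (x : E) (hf : DifferentiableAt ℝ f x) :
    pd i (fun y => c * f y) x = c * pd i f x := by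
  simp [pd, fderiv_const_mul hf]

lemma pd_sum {s : Finset (Fin d)} {F : Fin d → E → ℝ} (i : Fin d) (x : E)
    (hF : ∀ j ∈ s, DifferentiableAt ℝ (F j) x) :
    pd i (fun y => ∑ j ∈ s, F j y) x = ∑ j ∈ s, pd i (F j) x := by
  simp [pd, fderiv_fun_sum hF]

lemma contDiff_coord (j : Fin d) : ContDiff ℝ (⊤ : ℕ∞) (fun y : E => y j) :=
  by
  have h : (fun y : E => y j) = (EuclideanSpace.proj j : E →L[ℝ] ℝ) := rfl
  rw [h]; exact ContinuousLinearMap.contDiff _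

lemma pd_coord (j i : Fin d) (x : E) :
    pd i (fun y : E => y j) x = if j = i then 1 else 0 := by
  have h : (fun y : E => y j) = (EuclideanSpace.proj j : E →L[ℝ] ℝ) := rfl
  rw [pd, h, ContinuousLinearMap.fderiv]
  simp [EuclideanSpace.single_apply, eq_comm]

lemma normsq_eq (y : E) : ‖y‖ ^ 2 = ∑ j, (y j) * (y j) := by
  rw [EuclideanSpace.norm_eq, Real.sq_sqrt (by positivity)]
  simp [sq_abs, sq]

lemma contDiff_normsq : ContDiff ℝ (⊤ : ℕ∞) (fun y : E => ‖y‖ ^ 2) := by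
  have : (fun y : E => ‖y‖ ^ 2) = fun y : E => ∑ j, (y j) * (y j) := funext normsq_eq
  rw [this]
  exact ContDiff.sum fun j _ => (contDiff_coord j).mul (contDiff_coord j)

lemma pd_normsq (i : Fin d) (x : E) :
    pd i (fun y : E => ‖y‖ ^ 2) x = 2 * x i := by
  have h : (fun y : E => ‖y‖ ^ 2) = fun y : E => ∑ j, (y j) * (y j) := funext normsq_eq
  rw [h, pd_sum i x (fun j _ => ((diffAt (contDiff_coord j) x).fun_mul (diffAt (contDiff_coord j) x)))]
  have : ∀ j, pd i (fun y : E => y j * y j) x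
      = (if j = i then 1 else 0) * x j + x j * (if j = i then 1 else 0) := by
    intro j
    rw [pd_mul i x (diffAt (contDiff_coord j) x) (diffAt (contDiff_coord j) x), pd_coord]
  simp only [this]
  rw [Finset.sum_congr rfl (fun j _ => by split_ifs <;> ring :
    ∀ j ∈ Finset.univ, (if j = i then 1 else 0) * x j + x j * (if j = i then (1:ℝ) else 0)
      = if j = i then 2 * x j else 0)]
  simp

lemma pd_comm {f : E → ℝ} (hf : ContDiff ℝ (⊤ : ℕ∞) f) (i j : Fin d) (x : E) :
    pd i (pd j f) x = pd j (pd i f) x := by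
  have hd1 : Differentiable ℝ f := hf.differentiable (by simp)
  have h2 : DifferentiableAt ℝ (fderiv ℝ f) x :=
    ((hf.fderiv_right (m := (⊤ : ℕ∞)) (by simp)).differentiable (by simp)) x
  have key : ∀ v w, fderiv ℝ (fderiv ℝ f) x v w = fderiv ℝ (fderiv ℝ f) x w v :=
    second_derivative_symmetric (fun y => (hd1 y).hasFDerivAt) h2.hasFDerivAt
  have expand : ∀ a b : Fin d, pd a (pd b f) x
      = fderiv ℝ (fderiv ℝ f) x (EuclideanSpace.single a 1) (EuclideanSpace.single b 1) := by
    intro a b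
    have hb : pd b f = fun y => (fderiv ℝ f y) (EuclideanSpace.single b 1) := rfl
    rw [pd, hb, fderiv_clm_apply h2 (differentiableAt_const _)]
    simp
  rw [expand, expand, key]

lemma pd_const (c : ℝ) (i : Fin d) (x : E) : pd i (fun _ : E => c) x = 0 := by
  simp [pd]

lemma contDiff_Dop (i j : Fin d) {f : E → ℝ} (hf : ContDiff ℝ (⊤ : ℕ∞) f) :
    ContDiff ℝ (⊤ : ℕ∞) (fun y => Dop i j f y) := by
  unfold Dop
  exact ((contDiff_coord i).mul (contDiff_pd j hf)).sub
    ((contDiff_coord j).mul (contDiff_pd i hf))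

lemma contDiff_dop (β : ℝ) (j : Fin d) {g : E → ℝ} (hg : ContDiff ℝ (⊤ : ℕ∞) g) :
    ContDiff ℝ (⊤ : ℕ∞) (fun y => dop β j g y) := by
  unfold dop
  exact (((contDiff_const.sub contDiff_normsq).neg).mul (contDiff_pd j hg)).add
    (((contDiff_const.mul (contDiff_coord j))).mul hg)

lemma pd_dop (β : ℝ) (j k : Fin d) {g : E → ℝ} (hg : ContDiff ℝ (⊤ : ℕ∞) g) (x : E) :
    pd k (fun y => dop β j g y) x
      = 2 * x k * pd j g x - (1 - ‖x‖ ^ 2) * pd k (pd j g) x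
        + 2 * (β + 1) * ((if j = k then 1 else 0) * g x + x j * pd k g x) := by
  have h0 : (fun y => dop β j g y)
      = fun y => (-(1 - ‖y‖ ^ 2)) * pd j g y + (2 * (β + 1)) * (y j * g y) := by
    funext y; unfold dop; ring
  have hm : DifferentiableAt ℝ (fun y : E => -(1 - ‖y‖ ^ 2)) x :=
    diffAt ((contDiff_const.sub contDiff_normsq).neg) x
  have hpjg : DifferentiableAt ℝ (pd j g) x := diffAt (contDiff_pd j hg) x
  have hcg : DifferentiableAt ℝ (fun y : E => y j * g y) x :=
    (diffAt (contDiff_coord j) x).mul (diffAt hg x)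
  rw [h0, pd_add k x (hm.fun_mul hpjg) (DifferentiableAt.const_mul hcg _),
    pd_mul k x hm hpjg, pd_const_mul _ k x hcg,
    pd_mul k x (diffAt (contDiff_coord j) x) (diffAt hg x), pd_coord]
  have hneg : pd k (fun y : E => -(1 - ‖y‖ ^ 2)) x = 2 * x k := by
    have h1 : (fun y : E => -(1 - ‖y‖ ^ 2)) = fun y : E => ‖y‖ ^ 2 + (-1) := by
      funext y; ring
    rw [h1, pd_add k x (diffAt contDiff_normsq x) (differentiableAt_const _),
      pd_normsq, pd_const]
    ring
  rw [hneg]; ring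

lemma pd_Dop (i j l : Fin d) {f : E → ℝ} (hf : ContDiff ℝ (⊤ : ℕ∞) f) (x : E) :
    pd l (fun y => Dop i j f y) x
      = ((if i = l then 1 else 0) * pd j f x + x i * pd l (pd j f) x)
        - ((if j = l then 1 else 0) * pd i f x + x j * pd l (pd i f) x) := by
  have h0 : (fun y => Dop i j f y)
      = fun y => (fun z : E => z i) y * pd j f y - (fun z : E => z j) y * pd i f y := rfl
  rw [h0, pd_sub l x ((diffAt (contDiff_coord i) x).fun_mul (diffAt (contDiff_pd j hf) x))
      ((diffAt (contDiff_coord j) x).fun_mul (diffAt (contDiff_pd i hf) x)),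
    pd_mul l x (diffAt (contDiff_coord i) x) (diffAt (contDiff_pd j hf) x),
    pd_mul l x (diffAt (contDiff_coord j) x) (diffAt (contDiff_pd i hf) x),
    pd_coord, pd_coord]

lemma DopDop (i j : Fin d) (hij : i ≠ j) {f : E → ℝ} (hf : ContDiff ℝ (⊤ : ℕ∞) f) (x : E) :
    Dop i j (fun y => Dop i j f y) x
      = x i * x i * pd j (pd j f) x + x j * x j * pd i (pd i f) x
        - 2 * (x i * x j) * pd i (pd j f) x - x i * pd i f x - x j * pd j f x := by
  have h0 : Dop i j (fun y => Dop i j f y) x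
      = x i * pd j (fun y => Dop i j f y) x - x j * pd i (fun y => Dop i j f y) x := rfl
  rw [h0, pd_Dop i j j hf x, pd_Dop i j i hf x, if_neg hij, if_neg (Ne.symm hij),
    if_pos rfl, if_pos rfl, pd_comm hf j i x]
  ring

lemma pd_DopDop (i j k : Fin d) (hij : i ≠ j) {f : E → ℝ} (hf : ContDiff ℝ (⊤ : ℕ∞) f) (x : E) :
    pd k (fun y => Dop i j (fun z => Dop i j f z) y) x
      = (2 * (if i = k then 1 else 0) * x i * pd j (pd j f) x
          + x i * x i * pd k (pd j (pd j f)) x)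
        + (2 * (if j = k then 1 else 0) * x j * pd i (pd i f) x
          + x j * x j * pd k (pd i (pd i f)) x)
        - 2 * (((if i = k then 1 else 0) * x j + (if j = k then 1 else 0) * x i)
            * pd i (pd j f) x + x i * x j * pd k (pd i (pd j f)) x)
        - ((if i = k then 1 else 0) * pd i f x + x i * pd k (pd i f) x)
        - ((if j = k then 1 else 0) * pd j f x + x j * pd k (pd j f) x) := by
  have hci := diffAt (contDiff_coord i) x
  have hcj := diffAt (contDiff_coord j) x
  have hSjj := contDiff_pd j (contDiff_pd j hf)
  have hSii := contDiff_pd i (contDiff_pd i hf)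
  have hSij := contDiff_pd i (contDiff_pd j hf)
  have hPi := contDiff_pd i hf
  have hPj := contDiff_pd j hf
  have h0 : (fun y => Dop i j (fun z => Dop i j f z) y)
      = fun y => ((((fun z : E => z i * z i) y * pd j (pd j f) y
          + (fun z : E => z j * z j) y * pd i (pd i f) y)
          - (fun z : E => 2 * (z i * z j)) y * pd i (pd j f) y)
          - (fun z : E => z i) y * pd i f y)
          - (fun z : E => z j) y * pd j f y := by
    funext y
    rw [DopDop i j hij hf y]
  have d1 : DifferentiableAt ℝ (fun z : E => z i * z i) x := hci.mul hci
  have d2 : DifferentiableAt ℝ (fun z : E => z j * z j) x := hcj.mul hcj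
  have d3 : DifferentiableAt ℝ (fun z : E => 2 * (z i * z j)) x :=
    (hci.mul hcj).const_mul _
  have e1 : DifferentiableAt ℝ (fun y : E => (fun z : E => z i * z i) y * pd j (pd j f) y) x :=
    d1.mul (diffAt hSjj x)
  have e2 : DifferentiableAt ℝ (fun y : E => (fun z : E => z j * z j) y * pd i (pd i f) y) x :=
    d2.mul (diffAt hSii x)
  have e3 : DifferentiableAt ℝ (fun y : E => (fun z : E => 2 * (z i * z j)) y * pd i (pd j f) y) x :=
    d3.mul (diffAt hSij x)
  have e4 : DifferentiableAt ℝ (fun y : E => (fun z : E => z i) y * pd i f y) x :=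
    hci.mul (diffAt hPi x)
  have e5 : DifferentiableAt ℝ (fun y : E => (fun z : E => z j) y * pd j f y) x :=
    hcj.mul (diffAt hPj x)
  rw [h0, pd_sub k x (((e1.fun_add e2).fun_sub e3).fun_sub e4) e5,
    pd_sub k x ((e1.fun_add e2).fun_sub e3) e4,
    pd_sub k x (e1.fun_add e2) e3,
    pd_add k x e1 e2,
    pd_mul k x d1 (diffAt hSjj x),
    pd_mul k x d2 (diffAt hSii x),
    pd_mul k x d3 (diffAt hSij x),
    pd_mul k x hci (diffAt hPi x),
    pd_mul k x hcj (diffAt hPj x)]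
  have g1 : pd k (fun z : E => z i * z i) x = 2 * (if i = k then 1 else 0) * x i := by
    rw [pd_mul k x hci hci, pd_coord]; ring
  have g2 : pd k (fun z : E => z j * z j) x = 2 * (if j = k then 1 else 0) * x j := by
    rw [pd_mul k x hcj hcj, pd_coord]; ring
  have g3 : pd k (fun z : E => 2 * (z i * z j)) x
      = 2 * ((if i = k then 1 else 0) * x j + x i * (if j = k then 1 else 0)) := by
    rw [pd_const_mul _ k x (hci.fun_mul hcj), pd_mul k x hci hcj, pd_coord, pd_coord]
  rw [g1, g2, g3, pd_coord, pd_coord]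
  ring

lemma pd_Lop {q : EuclideanSpace ℝ (Fin d) → ℝ} (hq : ContDiff ℝ (⊤ : ℕ∞) q) (β : ℝ) (k : Fin d)
    (x : E) :
    pd k (fun y => Lop β q y) x
      = (∑ j : Fin d, pd k (fun y => dop β j (pd j q) y) x)
        - ∑ i : Fin d, ∑ j : Fin d,
            if i < j then pd k (fun y => Dop i j (fun z => Dop i j q z) y) x else 0 := by
  have hA : ∀ j : Fin d, ContDiff ℝ (⊤ : ℕ∞) (fun y => dop β j (pd j q) y) := fun j =>
    contDiff_dop β j (contDiff_pd j hq)
  have hB : ∀ i j : Fin d, ContDiff ℝ (⊤ : ℕ∞) (fun y => Dop i j (fun z => Dop i j q z) y) :=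
    fun i j => contDiff_Dop i j (contDiff_Dop i j hq)
  have hB' : ∀ i j : Fin d,
      ContDiff ℝ (⊤ : ℕ∞) (fun y => if i < j then Dop i j (fun z => Dop i j q z) y else 0) := by
    intro i j
    by_cases h : i < j
    · simp only [if_pos h]; exact hB i j
    · simp only [if_neg h]; exact contDiff_const
  have h0 : (fun y => Lop β q y)
      = fun y => (∑ j : Fin d, dop β j (pd j q) y)
          - (∑ i : Fin d, ∑ j : Fin d,
              if i < j then Dop i j (fun z => Dop i j q z) y else 0) := rfl
  rw [h0, pd_sub k x (diffAt (ContDiff.sum fun j _ => hA j) x)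
      (diffAt (ContDiff.sum fun i _ => ContDiff.sum fun j _ => hB' i j) x)]
  congr 1
  · exact pd_sum k x fun j _ => diffAt (hA j) x
  · rw [pd_sum k x fun i _ => diffAt (ContDiff.sum fun j _ => hB' i j) x]
    refine Finset.sum_congr rfl fun i _ => ?_
    rw [pd_sum k x fun j _ => diffAt (hB' i j) x]
    refine Finset.sum_congr rfl fun j _ => ?_
    by_cases h : i < j
    · simp only [if_pos h]
    · simp only [if_neg h, pd_const]


end Aux

/-- Intertwining relation `ℒ^{(α)} ∂_k = ∂_k ℒ^{(α−1)} − (d + 2α − 1) ∂_k`. -/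
theorem stmt6 {d : ℕ} (hd : 1 ≤ d) (α : ℝ) (k : Fin d)
    (q : EuclideanSpace ℝ (Fin d) → ℝ) (hq : ContDiff ℝ (⊤ : ℕ∞) q)
    (x : EuclideanSpace ℝ (Fin d)) :
    Lop α (fun y => pd k q y) x
      = pd k (fun y => Lop (α - 1) q y) x - ((d : ℝ) + 2 * α - 1) * pd k q x := by
  have hT : ∀ a b c : Fin d, pd a (pd b (pd c q)) x = pd c (pd a (pd b q)) x := by
    intro a b c
    rw [show pd b (pd c q) = pd c (pd b q) from funext fun y => pd_comm hq b c y,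
      pd_comm (contDiff_pd b hq) a c x]
  have hj : ∀ j : Fin d,
      pd k (fun y => dop (α - 1) j (pd j q) y) x - dop α j (pd j (pd k q)) x
      = 2 * x k * pd j (pd j q) x - 2 * x j * pd k (pd j q) x
        + (if j = k then 2 * α * pd k q x else 0) := by
    intro j
    rw [pd_dop (α - 1) j k (contDiff_pd j hq) x]
    have hD : dop α j (pd j (pd k q)) x
        = -(1 - ‖x‖ ^ 2) * pd j (pd j (pd k q)) x + 2 * (α + 1) * x j * pd j (pd k q) x := rfl
    rw [hD, hT j j k, pd_comm hq j k x]
    rcases eq_or_ne j k with h | h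
    · subst h; simp only [if_pos rfl, if_true, eq_self_iff_true]; ring
    · simp only [if_neg h]; ring
  have hpair : ∀ i j : Fin d, i < j →
      pd k (fun y => Dop i j (fun z => Dop i j q z) y) x
        - Dop i j (fun y => Dop i j (pd k q) y) x
      = (if i = k then (2 * x k * pd j (pd j q) x - 2 * x j * pd k (pd j q) x - pd k q x) else 0)
        + (if j = k then (2 * x k * pd i (pd i q) x - 2 * x i * pd k (pd i q) x - pd k q x)
            else 0) := by
    intro i j h
    have hne : i ≠ j := ne_of_lt h
    rw [pd_DopDop i j k hne hq x, DopDop i j hne (contDiff_pd k hq) x,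
      hT j j k, hT i i k, hT i j k, pd_comm hq i k x, pd_comm hq j k x]
    rcases eq_or_ne i k with hi | hi
    · rcases eq_or_ne j k with hjk | hjk
      · exact absurd (hi.trans hjk.symm) hne
      · subst hi; simp only [if_pos rfl, if_neg hjk, if_true, eq_self_iff_true]; ring
    · rcases eq_or_ne j k with hjk | hjk
      · subst hjk; simp only [if_neg hi, if_pos rfl, if_true, eq_self_iff_true]
        rw [pd_comm hq i j x]
        ring
      · simp only [if_neg hi, if_neg hjk]; ring
  have h1 : (∑ j : Fin d, pd k (fun y => dop (α - 1) j (pd j q) y) x)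
      - (∑ j : Fin d, dop α j (pd j (pd k q)) x)
      = (∑ j : Fin d, (2 * x k * pd j (pd j q) x - 2 * x j * pd k (pd j q) x))
        + 2 * α * pd k q x := by
    rw [← Finset.sum_sub_distrib, Finset.sum_congr rfl fun j _ => hj j,
      Finset.sum_add_distrib]
    congr 1
    simp
  have h2 : (∑ i : Fin d, ∑ j : Fin d,
        if i < j then pd k (fun y => Dop i j (fun z => Dop i j q z) y) x else 0)
      - (∑ i : Fin d, ∑ j : Fin d,
        if i < j then Dop i j (fun y => Dop i j (pd k q) y) x else 0)
      = (∑ j : Fin d, (2 * x k * pd j (pd j q) x - 2 * x j * pd k (pd j q) x))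
        - (d : ℝ) * pd k q x + pd k q x := by
    set C : Fin d → ℝ := fun m =>
      2 * x k * pd m (pd m q) x - 2 * x m * pd k (pd m q) x - pd k q x with hC
    have step1 : ∀ i j : Fin d,
        (if i < j then pd k (fun y => Dop i j (fun z => Dop i j q z) y) x else 0)
          - (if i < j then Dop i j (fun y => Dop i j (pd k q) y) x else 0)
        = (if i = k then (if i < j then C j else 0) else 0)
          + (if j = k then (if i < j then C i else 0) else 0) := by
      intro i j
      by_cases h : i < j
      · simp only [if_pos h]
        rw [hpair i j h]
      · simp only [if_neg h]; simp
    rw [← Finset.sum_sub_distrib]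
    calc (∑ i : Fin d, ((∑ j : Fin d,
            if i < j then pd k (fun y => Dop i j (fun z => Dop i j q z) y) x else 0)
          - ∑ j : Fin d, if i < j then Dop i j (fun y => Dop i j (pd k q) y) x else 0))
        = ∑ i : Fin d, ∑ j : Fin d,
            ((if i = k then (if i < j then C j else 0) else 0)
              + (if j = k then (if i < j then C i else 0) else 0)) := by
          refine Finset.sum_congr rfl fun i _ => ?_
          rw [← Finset.sum_sub_distrib]
          exact Finset.sum_congr rfl fun j _ => step1 i j
      _ = (∑ i : Fin d, ∑ j : Fin d, (if i = k then (if i < j then C j else 0) else 0))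
          + ∑ i : Fin d, ∑ j : Fin d, (if j = k then (if i < j then C i else 0) else 0) := by
          rw [← Finset.sum_add_distrib]
          exact Finset.sum_congr rfl fun i _ => Finset.sum_add_distrib
      _ = (∑ j : Fin d, (if k < j then C j else 0))
          + ∑ i : Fin d, (if i < k then C i else 0) := by
          congr 1
          · rw [Finset.sum_eq_single k]
            · simp
            · intro b _ hb; simp [hb]
            · intro hk; exact absurd (Finset.mem_univ k) hk
          · refine Finset.sum_congr rfl fun i _ => ?_
            simp
      _ = ∑ m : Fin d, ((if k < m then C m else 0) + (if m < k then C m else 0)) := by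
          rw [Finset.sum_add_distrib]
      _ = ∑ m : Fin d, (C m - (if m = k then C m else 0)) := by
          refine Finset.sum_congr rfl fun m _ => ?_
          rcases lt_trichotomy m k with h | h | h
          · simp [h, not_lt_of_gt h, ne_of_lt h]
          · simp [h]
          · simp [h, not_lt_of_gt h, (ne_of_gt h)]
      _ = (∑ m : Fin d, C m) - C k := by
          rw [Finset.sum_sub_distrib]
          congr 1
          simp
      _ = (∑ j : Fin d, (2 * x k * pd j (pd j q) x - 2 * x j * pd k (pd j q) x))
          - (d : ℝ) * pd k q x + pd k q x := by
          have : ∑ m : Fin d, C m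
              = (∑ j : Fin d, (2 * x k * pd j (pd j q) x - 2 * x j * pd k (pd j q) x))
                - (d : ℝ) * pd k q x := by
            rw [hC, Finset.sum_sub_distrib, Finset.sum_const, Finset.card_univ,
              Fintype.card_fin, nsmul_eq_mul]
          rw [this, hC]
          ring
  rw [pd_Lop hq (α - 1) k x]
  have hL : Lop α (fun y => pd k q y) x
      = (∑ j : Fin d, dop α j (pd j (pd k q)) x)
        - ∑ i : Fin d, ∑ j : Fin d,
            if i < j then Dop i j (fun y => Dop i j (pd k q) y) x else 0 := rfl
  rw [hL]
  linarith [h1, h2]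
end

section
/- If h is a harmonic polynomial on ℝ^d, homogeneous of degree n, then −Σ_{1≤i<j≤d} D_{i,j}² h = n(n+d−2) h, where D_{i,j} = x_i ∂_j − x_j ∂_i. -/
open MeasureTheory MvPolynomial

lemma my_pderiv_comm {d : ℕ} (i j : Fin d) (p : MvPolynomial (Fin d) ℝ) :
    pderiv i (pderiv j p) = pderiv j (pderiv i p) := by
  induction p using MvPolynomial.induction_on with
  | C a => simp [pderiv_C]
  | add p q hp hq => simp [hp, hq]
  | mul_X p k h =>
    simp only [pderiv_mul, map_add, pderiv_X, h]
    classical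
    rcases eq_or_ne k i with rfl | hki <;> rcases eq_or_ne k j with rfl | hkj <;>
      simp_all [Pi.single_apply, pderiv_mul]

lemma euler_mono {d : ℕ} (s : Fin d →₀ ℕ) (a : ℝ) (i : Fin d) :
    X i * pderiv i (monomial s a) = monomial s ((s i : ℝ) * a) := by
  rw [pderiv_monomial]
  rcases Nat.eq_zero_or_pos (s i) with h | h
  · simp [h]
  · rw [X, monomial_mul, one_mul, add_tsub_cancel_of_le, mul_comm]
    rwa [Finsupp.single_le_iff]

lemma my_euler {d n : ℕ} {p : MvPolynomial (Fin d) ℝ} (h : p.IsHomogeneous n) :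
    ∑ i : Fin d, X i * pderiv i p = C (n : ℝ) * p := by
  conv_lhs => rw [← p.support_sum_monomial_coeff]
  conv_rhs => rw [← p.support_sum_monomial_coeff]
  simp only [map_sum, Finset.mul_sum, Finset.sum_mul]
  rw [Finset.sum_comm]
  refine Finset.sum_congr rfl fun s hs => ?_
  have hc : coeff s p ≠ 0 := (mem_support_iff).mp hs
  have hdeg : (∑ i : Fin d, s i) = n := by
    have h2 := h hc
    rw [Finsupp.weight_apply] at h2
    rw [← h2, Finsupp.sum_fintype] <;> simp
  simp only [euler_mono]
  rw [← map_sum, ← Finset.sum_mul, C_mul_monomial]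
  congr 1
  rw [← Nat.cast_sum, hdeg]

lemma my_euler2 {d n : ℕ} {p : MvPolynomial (Fin d) ℝ} (h : p.IsHomogeneous n) :
    ∑ i : Fin d, ∑ j : Fin d, X i * X j * pderiv i (pderiv j p)
      = C ((n : ℝ) ^ 2 - (n : ℝ)) * p := by
  classical
  have e1 : ∑ i : Fin d, X i * pderiv i (∑ j : Fin d, X j * pderiv j p)
      = C ((n : ℝ)^2) * p := by
    rw [my_euler h]
    simp only [pderiv_C_mul]
    rw [Finset.sum_congr rfl fun i _ =>
      (by ring : X i * (C (n:ℝ) * pderiv i p) = C (n:ℝ) * (X i * pderiv i p)),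
      ← Finset.mul_sum, my_euler h, ← mul_assoc, ← map_mul]
    rw [sq]
  have e2 : ∑ i : Fin d, X i * pderiv i (∑ j : Fin d, X j * pderiv j p)
      = (∑ i : Fin d, X i * pderiv i p)
        + ∑ i : Fin d, ∑ j : Fin d, X i * X j * pderiv i (pderiv j p) := by
    rw [← Finset.sum_add_distrib]
    refine Finset.sum_congr rfl fun i _ => ?_
    rw [map_sum, Finset.mul_sum]
    classical
    simp only [pderiv_mul, pderiv_X, Pi.single_apply, mul_add, Finset.sum_add_distrib,
      ite_mul, one_mul, zero_mul, mul_ite, mul_zero, Finset.sum_ite_eq, Finset.sum_ite_eq',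
      Finset.mem_univ, if_true, mul_assoc]
  have := e1.symm.trans e2
  rw [my_euler h] at this
  have h3 : ∑ i : Fin d, ∑ j : Fin d, X i * X j * pderiv i (pderiv j p)
      = C ((n:ℝ)^2) * p - C (n:ℝ) * p := by
    linear_combination -this
  rw [h3, ← sub_mul, ← map_sub]

lemma hasFDerivAt_eval {d : ℕ} (p : MvPolynomial (Fin d) ℝ) (x : EuclideanSpace ℝ (Fin d)) :
    HasFDerivAt (fun z : EuclideanSpace ℝ (Fin d) => eval (fun m => z m) p)
      (∑ i : Fin d, eval (fun m => x m) (pderiv i p) • (EuclideanSpace.proj i (𝕜 := ℝ))) x := by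
  induction p using MvPolynomial.induction_on with
  | C a =>
    simp only [eval_C, pderiv_C, map_zero, zero_smul, Finset.sum_const_zero]
    exact hasFDerivAt_const a x
  | add p q hp hq =>
    simp only [map_add, add_smul, Finset.sum_add_distrib]
    exact hp.add hq
  | mul_X p k h =>
    have hk : HasFDerivAt (fun z : EuclideanSpace ℝ (Fin d) => z k)
        (EuclideanSpace.proj k (𝕜 := ℝ)) x :=
      ((EuclideanSpace.proj k : EuclideanSpace ℝ (Fin d) →L[ℝ] ℝ)).hasFDerivAt
    have hm := h.mul hk
    simp only [map_mul, eval_X]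
    refine hm.congr_fderiv ?_
    ext v
    classical
    simp only [ContinuousLinearMap.sum_apply, ContinuousLinearMap.smul_apply,
      ContinuousLinearMap.add_apply, ContinuousLinearMap.coe_smul', Pi.smul_apply,
      pderiv_mul, map_add, map_mul, eval_X, pderiv_X,
      smul_eq_mul, Pi.single_apply, apply_ite (eval fun m => x m), map_one, map_zero]
    simp only [add_mul, mul_ite, ite_mul, mul_one, mul_zero, zero_mul, Finset.sum_add_distrib,
      Finset.sum_ite_eq, Finset.mem_univ, if_true, Finset.mul_sum]
    rw [add_comm]
    congr 1
    exact Finset.sum_congr rfl fun i _ => by ring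

lemma pd_eval {d : ℕ} (p : MvPolynomial (Fin d) ℝ) (i : Fin d) (x : EuclideanSpace ℝ (Fin d)) :
    pd i (fun z => eval (fun m => z m) p) x = eval (fun m => x m) (pderiv i p) := by
  unfold pd
  rw [(hasFDerivAt_eval p x).fderiv]
  classical
  simp [EuclideanSpace.single_apply]

/-- Polynomial version of `Dop`. -/
noncomputable def DP {d : ℕ} (k l : Fin d) (q : MvPolynomial (Fin d) ℝ) :
    MvPolynomial (Fin d) ℝ :=
  X k * pderiv l q - X l * pderiv k q

lemma Dop_eval {d : ℕ} (k l : Fin d) (q : MvPolynomial (Fin d) ℝ)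
    (x : EuclideanSpace ℝ (Fin d)) :
    Dop k l (fun z => eval (fun m => z m) q) x = eval (fun m => x m) (DP k l q) := by
  unfold Dop DP
  rw [pd_eval, pd_eval]
  simp

lemma Dop2_eval {d : ℕ} (k l : Fin d) (q : MvPolynomial (Fin d) ℝ)
    (x : EuclideanSpace ℝ (Fin d)) :
    Dop k l (fun y => Dop k l (fun z => eval (fun m => z m) q) y) x
      = eval (fun m => x m) (DP k l (DP k l q)) := by
  have h1 : (fun y => Dop k l (fun z => eval (fun m => z m) q) y)
      = fun y => eval (fun m => y m) (DP k l q) := funext fun y => Dop_eval k l q y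
  rw [h1]
  exact Dop_eval k l (DP k l q) x

lemma DP_sq {d : ℕ} {i j : Fin d} (h : i ≠ j) (p : MvPolynomial (Fin d) ℝ) :
    DP i j (DP i j p)
      = X i * X i * pderiv j (pderiv j p) + X j * X j * pderiv i (pderiv i p)
        - 2 * (X i * X j * pderiv i (pderiv j p)) - X i * pderiv i p - X j * pderiv j p := by
  unfold DP
  simp only [map_sub, pderiv_mul, pderiv_X_self, pderiv_X_of_ne h, pderiv_X_of_ne h.symm]
  rw [my_pderiv_comm j i]
  ring

/-- Harmonic polynomials homogeneous of degree `n` satisfy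
`−Σ_{i<j} D_{i,j}² h = n(n+d−2) h`. -/
theorem stmt7 {d : ℕ} (hd : 1 ≤ d) (n : ℕ) (p : MvPolynomial (Fin d) ℝ)
    (hhom : p.IsHomogeneous n)
    (hharm : (∑ i : Fin d, MvPolynomial.pderiv i (MvPolynomial.pderiv i p)) = 0)
    (x : EuclideanSpace ℝ (Fin d)) :
    -(∑ i : Fin d, ∑ j : Fin d,
        if i < j then
          Dop i j (fun y => Dop i j (fun z => MvPolynomial.eval (fun m => z m) p) y) x
        else 0)
      = (n : ℝ) * ((n : ℝ) + (d : ℝ) - 2) * MvPolynomial.eval (fun m => x m) p := by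
  classical
  set v : Fin d → ℝ := fun m => x m with hv
  set P : ℝ := eval v p with hP
  set Dv : Fin d → ℝ := fun i => eval v (pderiv i p) with hDv
  set DD : Fin d → Fin d → ℝ := fun i j => eval v (pderiv i (pderiv j p)) with hDD
  set T : Fin d → Fin d → ℝ := fun i j =>
    v i * v i * DD j j + v j * v j * DD i i - 2 * (v i * v j * DD i j)
      - v i * Dv i - v j * Dv j with hT
  -- evaluated facts
  have f1 : ∑ i : Fin d, v i * Dv i = (n : ℝ) * P := by
    have := congrArg (eval v) (my_euler hhom)
    simpa [hDv, hP] using this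
  have f2 : ∑ i : Fin d, DD i i = 0 := by
    have := congrArg (eval v) hharm
    simpa [hDD] using this
  have f3 : ∑ i : Fin d, ∑ j : Fin d, v i * v j * DD i j = ((n:ℝ)^2 - n) * P := by
    have := congrArg (eval v) (my_euler2 hhom)
    simpa [hDD, hP] using this
  have fsym : ∀ i j, DD i j = DD j i := fun i j => by
    simp only [hDD, my_pderiv_comm]
  -- Replace the summand by T
  have hrepl : ∀ i j : Fin d, (if i < j then
        Dop i j (fun y => Dop i j (fun z : EuclideanSpace ℝ (Fin d) =>
          MvPolynomial.eval (fun m => z m) p) y) x else 0)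
      = (if i < j then T i j else 0) := by
    intro i j
    by_cases hij : i < j
    · rw [if_pos hij, if_pos hij, Dop2_eval, DP_sq hij.ne]
      simp only [hT, hDD, hDv, hv, hP, map_sub, map_add, map_mul, eval_X, map_ofNat]
    · rw [if_neg hij, if_neg hij]
  simp only [hrepl]
  -- symmetric-sum manipulation
  have hTsym : ∀ i j, T i j = T j i := fun i j => by
    simp only [hT, fsym i j]; ring
  have hswap : ∑ i : Fin d, ∑ j : Fin d, (if j < i then T i j else 0)
      = ∑ i : Fin d, ∑ j : Fin d, (if i < j then T i j else 0) := by
    rw [Finset.sum_comm]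
    exact Finset.sum_congr rfl fun i _ => Finset.sum_congr rfl fun j _ => by
      rw [hTsym i j]
  have hdiag : ∑ i : Fin d, ∑ j : Fin d, (if i = j then T i j else 0)
      = ∑ i : Fin d, T i i := by
    refine Finset.sum_congr rfl fun i _ => ?_
    simp
  have hsplit : (∑ i : Fin d, ∑ j : Fin d, (if i < j then T i j else 0))
      + (∑ i : Fin d, ∑ j : Fin d, (if j < i then T i j else 0))
      + (∑ i : Fin d, ∑ j : Fin d, (if i = j then T i j else 0))
      = ∑ i : Fin d, ∑ j : Fin d, T i j := by
    rw [← Finset.sum_add_distrib, ← Finset.sum_add_distrib]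
    refine Finset.sum_congr rfl fun i _ => ?_
    rw [← Finset.sum_add_distrib, ← Finset.sum_add_distrib]
    refine Finset.sum_congr rfl fun j _ => ?_
    rcases lt_trichotomy i j with h | h | h
    · simp [h, h.ne, not_lt.mpr h.le]
    · simp [h]
    · simp [h, h.ne', not_lt.mpr h.le]
  -- compute the full double sum
  have h4 : ∑ i : Fin d, ∑ j : Fin d, v i * v i * DD j j = 0 := by
    refine Finset.sum_eq_zero fun i _ => ?_
    rw [← Finset.mul_sum, f2, mul_zero]
  have h5 : ∑ i : Fin d, ∑ j : Fin d, v j * v j * DD i i = 0 := by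
    rw [Finset.sum_comm]
    refine Finset.sum_eq_zero fun j _ => ?_
    rw [← Finset.mul_sum, f2, mul_zero]
  have h6 : ∑ i : Fin d, ∑ j : Fin d, v i * Dv i = (d : ℝ) * ((n:ℝ) * P) := by
    rw [Finset.sum_comm]
    simp only [f1, Finset.sum_const, Finset.card_univ, Fintype.card_fin, nsmul_eq_mul]
  have h7 : ∑ i : Fin d, ∑ j : Fin d, v j * Dv j = (d : ℝ) * ((n:ℝ) * P) := by
    simp only [f1, Finset.sum_const, Finset.card_univ, Fintype.card_fin, nsmul_eq_mul]
  have htot : ∑ i : Fin d, ∑ j : Fin d, T i j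
      = -2 * ((n:ℝ)^2 - n) * P - 2 * ((d:ℝ) * ((n:ℝ) * P)) := by
    have expand : ∑ i : Fin d, ∑ j : Fin d, T i j
        = (∑ i : Fin d, ∑ j : Fin d, v i * v i * DD j j)
          + (∑ i : Fin d, ∑ j : Fin d, v j * v j * DD i i)
          - 2 * (∑ i : Fin d, ∑ j : Fin d, v i * v j * DD i j)
          - (∑ i : Fin d, ∑ j : Fin d, v i * Dv i)
          - (∑ i : Fin d, ∑ j : Fin d, v j * Dv j) := by
      simp only [hT, Finset.sum_sub_distrib, Finset.sum_add_distrib, Finset.mul_sum]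
    rw [expand, h4, h5, f3, h6, h7]
    ring
  have hdiag2 : ∑ i : Fin d, T i i = -2 * ((n:ℝ) * P) := by
    rw [Finset.sum_congr rfl fun i _ =>
      (by simp only [hT]; ring : T i i = -2 * (v i * Dv i)), ← Finset.mul_sum, f1]
  -- finish
  have key := hsplit
  rw [hswap, hdiag, htot, hdiag2] at key
  have : ∑ i : Fin d, ∑ j : Fin d, (if i < j then T i j else 0)
      = -((n:ℝ) * ((n:ℝ) + d - 2) * P) := by linarith [key]
  rw [this]
  ring
end

section
/- Let α > −1 and ρ > 0. Define the modified Sobolev inner product ⟨u,v⟩_{α,1,ρ} = ρ⟨∇u,∇v⟩_α + ⟨S^α_0 u, S^α_0 v⟩_α on H¹_α. Then for every n ≥ 0, the orthogonal polynomial space 𝒱^{α,1,ρ}_n (degree-n polynomials orthogonal to Π^d_{n−1} under ⟨·,·⟩_{α,1,ρ}) coincides with 𝒱^{α,1}_n (the ρ = 1 case), and the corresponding orthogonal projections of any u ∈ H¹_α onto these spaces coincide. -/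
open MeasureTheory

/-- The weighted Lebesgue inner product of two polynomials. -/
noncomputable def lebIP {d : ℕ} (β : ℝ) (p q : MvPolynomial (Fin d) ℝ) : ℝ :=
  ∫ x in Metric.ball (0 : EuclideanSpace ℝ (Fin d)) 1,
    MvPolynomial.eval (fun t => x t) p * MvPolynomial.eval (fun t => x t) q *
      (1 - ‖x‖ ^ 2) ^ β

/-- The modified Sobolev inner product
`⟨p,q⟩_{α,1,ρ} = ρ⟨∇p,∇q⟩_α + ⟨S^α_0 p, S^α_0 q⟩_α` of two polynomials. -/
noncomputable def sobIPr {d : ℕ} (α ρ : ℝ) (p q : MvPolynomial (Fin d) ℝ) : ℝ :=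
  ρ * (∑ i : Fin d, lebIP α (MvPolynomial.pderiv i p) (MvPolynomial.pderiv i q))
    + lebIP α p 1 * lebIP α q 1 / lebIP α (1 : MvPolynomial (Fin d) ℝ) 1

/-- The orthogonal polynomial space `𝒱^{α,1,ρ}_n`. -/
def Vr {d : ℕ} (α ρ : ℝ) (n : ℕ) : Set (MvPolynomial (Fin d) ℝ) :=
  {p | p.totalDegree ≤ n ∧
    ∀ q : MvPolynomial (Fin d) ℝ, q.totalDegree < n → sobIPr α ρ p q = 0}

/-- The `(α,1,ρ)`-inner product of `u ∈ H¹_α` (with weak gradient `g`) against a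
polynomial `q`. -/
noncomputable def sobIPrFun {d : ℕ} (α ρ : ℝ) (u : EuclideanSpace ℝ (Fin d) → ℝ)
    (g : EuclideanSpace ℝ (Fin d) → Fin d → ℝ) (q : MvPolynomial (Fin d) ℝ) : ℝ :=
  ρ * (∫ x in Metric.ball (0 : EuclideanSpace ℝ (Fin d)) 1,
        (∑ i : Fin d, g x i * MvPolynomial.eval (fun t => x t) (MvPolynomial.pderiv i q)) *
          (1 - ‖x‖ ^ 2) ^ α)
    + (∫ x in Metric.ball (0 : EuclideanSpace ℝ (Fin d)) 1, u x * (1 - ‖x‖ ^ 2) ^ α)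
        * lebIP α q 1 / lebIP α (1 : MvPolynomial (Fin d) ℝ) 1

/-- `u ∈ H¹_α` with weak gradient `g`. -/
structure IsH1alpha {d : ℕ} (α : ℝ) (u : EuclideanSpace ℝ (Fin d) → ℝ)
    (g : EuclideanSpace ℝ (Fin d) → Fin d → ℝ) : Prop where
  hu2 : IntegrableOn (fun x => (u x) ^ 2 * (1 - ‖x‖ ^ 2) ^ α)
    (Metric.ball (0 : EuclideanSpace ℝ (Fin d)) 1)
  hg2 : IntegrableOn (fun x => (∑ i : Fin d, (g x i) ^ 2) * (1 - ‖x‖ ^ 2) ^ α)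
    (Metric.ball (0 : EuclideanSpace ℝ (Fin d)) 1)
  weak : ∀ φ : EuclideanSpace ℝ (Fin d) → ℝ, ContDiff ℝ (⊤ : ℕ∞) φ →
    tsupport φ ⊆ Metric.ball (0 : EuclideanSpace ℝ (Fin d)) 1 →
    ∀ i : Fin d,
      (∫ x in Metric.ball (0 : EuclideanSpace ℝ (Fin d)) 1, u x * pd i φ x)
        = - ∫ x in Metric.ball (0 : EuclideanSpace ℝ (Fin d)) 1, g x i * φ x

lemma lebIP_zero_right {d : ℕ} (β : ℝ) (p : MvPolynomial (Fin d) ℝ) :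
    lebIP β p 0 = 0 := by
  simp [lebIP]

/-- Key step: if `p ∈ Vr α ρ n` with `n ≥ 1`, then the projection term vanishes against
anything. -/
lemma key {d : ℕ} {α ρ : ℝ} {n : ℕ} (hn : 1 ≤ n)
    {p : MvPolynomial (Fin d) ℝ} (hp : p ∈ Vr α ρ n) (c : ℝ) :
    lebIP α p 1 * c / lebIP α (1 : MvPolynomial (Fin d) ℝ) 1 = 0 := by
  have h1 : sobIPr α ρ p 1 = 0 := by
    refine hp.2 1 ?_
    rw [MvPolynomial.totalDegree_one]; omega
  unfold sobIPr at h1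
  simp only [MvPolynomial.pderiv_one, lebIP_zero_right, Finset.sum_const_zero, mul_zero,
    zero_add] at h1
  rcases eq_or_ne (lebIP α (1 : MvPolynomial (Fin d) ℝ) 1) 0 with hI | hI
  · rw [hI, div_zero]
  · have hLp : lebIP α p 1 = 0 := by
      rwa [mul_div_assoc, div_self hI, mul_one] at h1
    rw [hLp, zero_mul, zero_div]

/-- A `ρ`-free characterization of membership in `Vr α ρ n`. -/
lemma mem_Vr_iff {d : ℕ} (α : ℝ) {ρ : ℝ} (hρ : 0 < ρ) (n : ℕ)
    (p : MvPolynomial (Fin d) ℝ) :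
    p ∈ Vr α ρ n ↔ p.totalDegree ≤ n ∧
      ∀ q : MvPolynomial (Fin d) ℝ, q.totalDegree < n →
        (∑ i : Fin d, lebIP α (MvPolynomial.pderiv i p) (MvPolynomial.pderiv i q)) = 0 ∧
        lebIP α p 1 * lebIP α q 1 / lebIP α (1 : MvPolynomial (Fin d) ℝ) 1 = 0 := by
  constructor
  · rintro ⟨hdeg, h⟩
    refine ⟨hdeg, fun q hq => ?_⟩
    have hn : 1 ≤ n := by omega
    have hC := key hn ⟨hdeg, h⟩ (lebIP α q 1)
    have h0 := h q hq
    unfold sobIPr at h0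
    rw [hC, add_zero] at h0
    exact ⟨by
      have := mul_eq_zero.mp h0
      rcases this with h' | h'
      · exact absurd h' hρ.ne'
      · exact h', hC⟩
  · rintro ⟨hdeg, h⟩
    refine ⟨hdeg, fun q hq => ?_⟩
    obtain ⟨h1, h2⟩ := h q hq
    unfold sobIPr
    rw [h1, h2, mul_zero, add_zero]

lemma pderiv_eq_zero_of_totalDegree_eq_zero {d : ℕ} {q : MvPolynomial (Fin d) ℝ}
    (h : q.totalDegree = 0) (i : Fin d) : MvPolynomial.pderiv i q = 0 := by
  apply MvPolynomial.pderiv_eq_zero_of_notMem_vars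
  intro hi
  obtain ⟨m, hm, hmi⟩ := (MvPolynomial.mem_vars i).mp hi
  have := (MvPolynomial.totalDegree_eq_zero_iff (Fin d) q).mp h m hm i
  exact absurd this (Finsupp.mem_support_iff.mp hmi)

/-- Introducing a term-balancing constant `ρ > 0` in the Sobolev inner product changes
neither the orthogonal polynomial spaces nor the orthogonal projections onto them. -/
theorem stmt18 {d : ℕ} (hd : 1 ≤ d) (α : ℝ) (hα : -1 < α) (ρ : ℝ) (hρ : 0 < ρ) :
    (∀ n : ℕ, Vr (d := d) α ρ n = Vr (d := d) α 1 n) ∧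
    (∀ n : ℕ, ∀ u : EuclideanSpace ℝ (Fin d) → ℝ,
      ∀ g : EuclideanSpace ℝ (Fin d) → Fin d → ℝ, IsH1alpha α u g →
      ∀ p : MvPolynomial (Fin d) ℝ,
        p ∈ Vr (d := d) α ρ n →
        (∀ q ∈ Vr (d := d) α ρ n, sobIPrFun α ρ u g q = sobIPr α ρ p q) →
        p ∈ Vr (d := d) α 1 n ∧
          ∀ q ∈ Vr (d := d) α 1 n, sobIPrFun α 1 u g q = sobIPr α 1 p q) := by
  have hVr : ∀ n : ℕ, Vr (d := d) α ρ n = Vr (d := d) α 1 n := by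
    intro n
    ext p
    rw [mem_Vr_iff α hρ n, mem_Vr_iff α one_pos n]
  refine ⟨hVr, fun n u g _ p hp hproj => ?_⟩
  refine ⟨hVr n ▸ hp, fun q hq => ?_⟩
  have hq' : q ∈ Vr (d := d) α ρ n := (hVr n).symm ▸ hq
  have hproj_q := hproj q hq'
  rcases Nat.eq_zero_or_pos n with hn | hn
  · -- n = 0 : q is constant, all gradient terms vanish
    subst hn
    have hq0 : q.totalDegree = 0 := Nat.le_zero.mp hq'.1
    have hpd : ∀ i : Fin d, MvPolynomial.pderiv i q = 0 :=
      pderiv_eq_zero_of_totalDegree_eq_zero hq0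
    unfold sobIPrFun sobIPr at hproj_q ⊢
    simp only [hpd, lebIP_zero_right, map_zero, mul_zero,
      Finset.sum_const_zero, zero_mul, MeasureTheory.integral_zero, mul_zero, one_mul, zero_add] at hproj_q ⊢
    exact hproj_q
  · -- n ≥ 1 : projection terms vanish, cancel ρ
    have hkq := key hn hq'
    have hkp := key hn hp (lebIP α q 1)
    unfold sobIPrFun sobIPr at hproj_q ⊢
    rw [mul_comm (∫ x in Metric.ball (0 : EuclideanSpace ℝ (Fin d)) 1,
        u x * (1 - ‖x‖ ^ 2) ^ α) (lebIP α q 1), hkq, hkp, add_zero, add_zero] at hproj_q ⊢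
    rw [one_mul, one_mul]
    exact mul_left_cancel₀ hρ.ne' hproj_q
end
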